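/- arXiv:2002.10620 — 2 statements merged into one kernel-verified Lean document; each statement's English description precedes it below -/
import Mathlib

section
/- Let Q̂ and Q* be real-valued functions on a finite nonempty action set A, and let τ > 0. Define the Boltzmann distributions P̂(a) = exp(Q̂(a)/τ)/Σ_{a'} exp(Q̂(a')/τ) and P*(a) = exp(Q*(a)/τ)/Σ_{a'} exp(Q*(a')/τ). Then the KL divergence satisfies D_KL(P̂ ‖ P*) ≤ (2/τ) · max_a |Q̂(a) - Q*(a)|. -/
/-! Writing `x = Q / τ`, the log-ratio of two softmax distributions is
`log (P̂ a / P* a) = (x̂ a - x* a) + (log ∑ exp x* - log ∑ exp x̂)`.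
The first term is at most `ε / τ` with `ε = maxₐ |Q̂ a - Q* a|`, and so is the second, because
log-sum-exp is monotone and commutes with adding a constant. The KL divergence is a
`P̂`-average of these log-ratios, hence at most `2 ε / τ`. -/

open Real Finset

namespace Softmax

variable {ι : Type*} [Fintype ι]

noncomputable def softmax (f : ι → ℝ) (a : ι) : ℝ :=
  exp (f a) / ∑ b, exp (f b)

theorem sum_exp_pos [Nonempty ι] (f : ι → ℝ) : 0 < ∑ b, exp (f b) :=
  sum_pos (fun b _ => exp_pos (f b)) univ_nonempty

theorem softmax_pos [Nonempty ι] (f : ι → ℝ) (a : ι) : 0 < softmax f a :=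
  div_pos (exp_pos _) (sum_exp_pos f)

theorem sum_softmax [Nonempty ι] (f : ι → ℝ) : ∑ a, softmax f a = 1 := by
  simp only [softmax, ← sum_div, div_self (sum_exp_pos f).ne']

theorem log_softmax [Nonempty ι] (f : ι → ℝ) (a : ι) :
    log (softmax f a) = f a - log (∑ b, exp (f b)) := by
  rw [softmax, log_div (exp_pos _).ne' (sum_exp_pos f).ne', log_exp]

theorem log_sum_exp_le_of_le [Nonempty ι] {f g : ι → ℝ} {c : ℝ} (h : ∀ a, g a ≤ f a + c) :
    log (∑ a, exp (g a)) ≤ log (∑ a, exp (f a)) + c := by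
  have hsum : ∑ a, exp (g a) ≤ exp c * ∑ a, exp (f a) := by
    rw [mul_sum]
    exact sum_le_sum fun a _ => by rw [← exp_add, add_comm]; exact exp_le_exp.mpr (h a)
  calc log (∑ a, exp (g a)) ≤ log (exp c * ∑ a, exp (f a)) := log_le_log (sum_exp_pos g) hsum
    _ = log (∑ a, exp (f a)) + c := by
      rw [log_mul (exp_pos c).ne' (sum_exp_pos f).ne', log_exp, add_comm]

theorem log_softmax_div_softmax_le [Nonempty ι] {f g : ι → ℝ} {δ : ℝ}
    (h : ∀ a, |f a - g a| ≤ δ) (a : ι) :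
    log (softmax f a / softmax g a) ≤ 2 * δ := by
  have hlse : log (∑ b, exp (g b)) ≤ log (∑ b, exp (f b)) + δ :=
    log_sum_exp_le_of_le fun b => by linarith [neg_abs_le (f b - g b), h b]
  rw [log_div (softmax_pos f a).ne' (softmax_pos g a).ne', log_softmax, log_softmax]
  linarith [le_abs_self (f a - g a), h a]

end Softmax

theorem Finset.sum_mul_le_of_sum_eq_one {ι : Type*} (s : Finset ι) {p h : ι → ℝ} {c : ℝ}
    (hp : ∀ a ∈ s, 0 ≤ p a) (hsum : ∑ a ∈ s, p a = 1) (hle : ∀ a ∈ s, h a ≤ c) :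
    ∑ a ∈ s, p a * h a ≤ c :=
  calc ∑ a ∈ s, p a * h a ≤ ∑ a ∈ s, p a * c :=
        sum_le_sum fun a ha => mul_le_mul_of_nonneg_left (hle a ha) (hp a ha)
    _ = c := by rw [← sum_mul, hsum, one_mul]

open Softmax in
theorem kl_softmax_le (A : Type*) [Fintype A] [Nonempty A]
    (Qhat Qstar : A → ℝ) (τ : ℝ) (hτ : 0 < τ)
    (Phat Pstar : A → ℝ)
    (hPhat : ∀ a, Phat a = exp (Qhat a / τ) / ∑ a' : A, exp (Qhat a' / τ))
    (hPstar : ∀ a, Pstar a = exp (Qstar a / τ) / ∑ a' : A, exp (Qstar a' / τ)) :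
    ∑ a : A, Phat a * Real.log (Phat a / Pstar a) ≤
      (2 / τ) * Finset.univ.sup' Finset.univ_nonempty (fun a => |Qhat a - Qstar a|) := by
  obtain rfl : Phat = softmax (fun a => Qhat a / τ) := funext hPhat
  obtain rfl : Pstar = softmax (fun a => Qstar a / τ) := funext hPstar
  set ε := univ.sup' univ_nonempty (fun a => |Qhat a - Qstar a|)
  have hclose : ∀ a, |Qhat a / τ - Qstar a / τ| ≤ ε / τ := fun a => by
    rw [← sub_div, abs_div, abs_of_pos hτ]
    exact div_le_div_of_nonneg_right (le_sup' (fun a => |Qhat a - Qstar a|) (mem_univ a)) hτ.le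
  calc ∑ a, softmax _ a * log (softmax _ a / softmax _ a) ≤ 2 * (ε / τ) :=
        univ.sum_mul_le_of_sum_eq_one (fun a _ => (softmax_pos _ a).le) (sum_softmax _)
          fun a _ => log_softmax_div_softmax_le hclose a
    _ = 2 / τ * ε := by ring
end

section
/- (Reverse Pinsker inequality for finite distributions) Let μ and ν be probability mass functions on a finite set Ω, with α := min_{ω ∈ Ω} ν(ω) > 0. Then D_KL(μ ‖ ν) ≤ (2/α) · TV(μ, ν)², where TV(μ, ν) = (1/2) Σ_ω |μ(ω) − ν(ω)|. -/
open Real Finset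

theorem reverse_pinsker (Ω : Type*) [Fintype Ω] [Nonempty Ω]
    (μ ν : Ω → ℝ) (α : ℝ) (hα : 0 < α)
    (hμ0 : ∀ ω, 0 ≤ μ ω) (hμ1 : ∑ ω, μ ω = 1)
    (hν0 : ∀ ω, α ≤ ν ω) (hν1 : ∑ ω, ν ω = 1) :
    ∑ ω, μ ω * Real.log (μ ω / ν ω) ≤
      (2 / α) * ((1 / 2) * ∑ ω, |μ ω - ν ω|) ^ 2 := by
  classical
  have hν0' : ∀ ω, 0 < ν ω := fun ω => lt_of_lt_of_le hα (hν0 ω)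
  have h0 : ∑ ω, (μ ω - ν ω) = 0 := by
    rw [Finset.sum_sub_distrib, hμ1, hν1]; ring
  -- Step 1: D ≤ χ²
  have step1 : ∑ ω, μ ω * Real.log (μ ω / ν ω) ≤ ∑ ω, (μ ω - ν ω) ^ 2 / ν ω := by
    have key : ∀ ω, μ ω * Real.log (μ ω / ν ω) ≤ (μ ω - ν ω) ^ 2 / ν ω + (μ ω - ν ω) := by
      intro ω
      rcases eq_or_lt_of_le (hμ0 ω) with h | h
      · have hν := hν0' ω
        rw [← h]
        have heq : (0 - ν ω) ^ 2 / ν ω + (0 - ν ω) = 0 := by field_simp; ring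
        rw [zero_mul, heq]
      · have hlog := Real.log_le_sub_one_of_pos (div_pos h (hν0' ω))
        have h1 : μ ω * Real.log (μ ω / ν ω) ≤ μ ω * (μ ω / ν ω - 1) :=
          mul_le_mul_of_nonneg_left hlog (hμ0 ω)
        have h2 : μ ω * (μ ω / ν ω - 1) = (μ ω - ν ω) ^ 2 / ν ω + (μ ω - ν ω) := by
          have hν := (hν0' ω).ne'
          field_simp
          ring
        linarith
    calc ∑ ω, μ ω * Real.log (μ ω / ν ω)
        ≤ ∑ ω, ((μ ω - ν ω) ^ 2 / ν ω + (μ ω - ν ω)) :=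
          Finset.sum_le_sum fun ω _ => key ω
      _ = ∑ ω, (μ ω - ν ω) ^ 2 / ν ω := by rw [Finset.sum_add_distrib, h0, add_zero]
  -- Step 2: replace ν by α
  have step2 : ∑ ω, (μ ω - ν ω) ^ 2 / ν ω ≤ (∑ ω, (μ ω - ν ω) ^ 2) / α := by
    rw [Finset.sum_div]
    apply Finset.sum_le_sum
    intro ω _
    exact div_le_div_of_nonneg_left (sq_nonneg _) hα (hν0 ω)
  -- Step 3: sum of squares ≤ T²/2
  set T := ∑ ω, |μ ω - ν ω| with hT
  have step3 : ∑ ω, (μ ω - ν ω) ^ 2 ≤ T ^ 2 / 2 := by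
    set s := Finset.univ.filter (fun ω => ν ω ≤ μ ω) with hs
    set t := Finset.univ.filter (fun ω => ¬ ν ω ≤ μ ω) with ht
    have hsplit : ∀ f : Ω → ℝ, ∑ ω, f ω = ∑ ω ∈ s, f ω + ∑ ω ∈ t, f ω := by
      intro f
      rw [hs, ht, Finset.sum_filter_add_sum_filter_not]
    have hA : ∀ ω ∈ s, 0 ≤ μ ω - ν ω := by
      intro ω hω; have := (Finset.mem_filter.mp hω).2; linarith
    have hB : ∀ ω ∈ t, 0 ≤ ν ω - μ ω := by
      intro ω hω; have := (Finset.mem_filter.mp hω).2; push_neg at this; linarith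
    set A := ∑ ω ∈ s, (μ ω - ν ω) with hAdef
    set B := ∑ ω ∈ t, (ν ω - μ ω) with hBdef
    have hAB : A = B := by
      have := hsplit (fun ω => μ ω - ν ω)
      rw [h0] at this
      have hneg : ∑ ω ∈ t, (μ ω - ν ω) = -B := by
        rw [hBdef, ← Finset.sum_neg_distrib]
        apply Finset.sum_congr rfl; intro ω _; ring
      rw [hneg] at this
      linarith
    have hTA : T = A + B := by
      rw [hT, hsplit (fun ω => |μ ω - ν ω|), hAdef, hBdef]
      congr 1
      · apply Finset.sum_congr rfl; intro ω hω; exact abs_of_nonneg (hA ω hω)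
      · apply Finset.sum_congr rfl; intro ω hω
        rw [abs_sub_comm]; exact abs_of_nonneg (hB ω hω)
    have hsq : ∑ ω, (μ ω - ν ω) ^ 2 ≤ A ^ 2 + B ^ 2 := by
      rw [hsplit (fun ω => (μ ω - ν ω) ^ 2)]
      have h1 : ∑ ω ∈ s, (μ ω - ν ω) ^ 2 ≤ A ^ 2 :=
        Finset.sum_sq_le_sq_sum_of_nonneg hA
      have h2 : ∑ ω ∈ t, (μ ω - ν ω) ^ 2 ≤ B ^ 2 := by
        have : ∑ ω ∈ t, (μ ω - ν ω) ^ 2 = ∑ ω ∈ t, (ν ω - μ ω) ^ 2 := by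
          apply Finset.sum_congr rfl; intro ω _; ring
        rw [this]
        exact Finset.sum_sq_le_sq_sum_of_nonneg hB
      linarith
    have hT2 : T ^ 2 / 2 = A ^ 2 + B ^ 2 := by rw [hTA, hAB]; ring
    linarith
  have hfinal : (∑ ω, (μ ω - ν ω) ^ 2) / α ≤ (2 / α) * ((1 / 2) * T) ^ 2 := by
    have heq : (2 / α) * ((1 / 2) * T) ^ 2 = (T ^ 2 / 2) / α := by
      field_simp
    rw [heq]
    exact (div_le_div_iff_of_pos_right hα).mpr step3
  linarith
end
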